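/- arXiv:1009.0837 — 5 statements merged into one kernel-verified Lean document; each statement's English description precedes it below -/
import Mathlib

section
/- Let E be a pseudo effect algebra satisfying (RDP), and let d : E → ℝ be a subadditive mapping (d(0) = 0 and d(x+y) ≤ d(x) + d(y) whenever x+y is defined in E). Assume that for every x ∈ E the set D(x) := {d(x₁) + ⋯ + d(xₙ) : x = x₁ + ⋯ + xₙ, x₁, …, xₙ ∈ E, n ≥ 1} is bounded above in ℝ. Then the map m : E → ℝ defined by m(x) := sup D(x) is a signed measure on E. -/
/-! Concatenating decompositions of `a` and `b` gives one of `a + b`, so `m a + m b ≤ m (a + b)`.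
Conversely, (RDP) refines any decomposition `a + b = x₁ + ⋯ + xₙ` into decompositions of `a` and
of `b` whose `d`-sums, by subadditivity, dominate `d x₁ + ⋯ + d xₙ`; hence `m (a + b) ≤ m a + m b`. -/


/-- A pseudo effect algebra: a partial algebra `(E; +, 0, 1)` where the partial
addition is encoded as `padd : E → E → Option E` (`padd a b = some c` means
`a + b` is defined and equals `c`). -/
class PseudoEffectAlgebra (E : Type) where
  padd : E → E → Option E
  pzero : E
  pone : E
  /-- (i) `a+b` and `(a+b)+c` exist iff `b+c` and `a+(b+c)` exist ... -/
  assoc_defined : ∀ a b c : E,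
    (∃ x, padd a b = some x ∧ (padd x c).isSome) ↔
      (∃ y, padd b c = some y ∧ (padd a y).isSome)
  /-- ... and in this case `(a+b)+c = a+(b+c)`. -/
  assoc_eq : ∀ a b c x y : E, padd a b = some x → padd b c = some y →
    padd x c = padd a y
  /-- (ii) there is exactly one `d` with `a + d = 1`. -/
  exists_unique_right : ∀ a : E, ∃! d, padd a d = some pone
  /-- (ii) there is exactly one `e` with `e + a = 1`. -/
  exists_unique_left : ∀ a : E, ∃! e, padd e a = some pone
  /-- (iii) if `a+b` exists, there are `d, e` with `a+b = d+a = b+e`. -/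
  shift : ∀ a b c : E, padd a b = some c →
    ∃ d e, padd d a = some c ∧ padd b e = some c
  /-- (iv) if `1+a` exists then `a = 0`. -/
  one_add : ∀ a : E, (padd pone a).isSome → a = pzero
  /-- (iv) if `a+1` exists then `a = 0`. -/
  add_one : ∀ a : E, (padd a pone).isSome → a = pzero

namespace PseudoEffectAlgebra

variable {E : Type} [PseudoEffectAlgebra E]

/-- The induced partial order: `a ≤ b` iff `b = a + c` for some `c ∈ E`. -/
def pLe (a b : E) : Prop := ∃ c, padd a c = some b

/-- The Riesz Decomposition Property (RDP). -/
def RDP (E : Type) [PseudoEffectAlgebra E] : Prop :=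
  ∀ a₁ a₂ b₁ b₂ c : E, padd a₁ a₂ = some c → padd b₁ b₂ = some c →
    ∃ d₁ d₂ d₃ d₄ : E, padd d₁ d₂ = some a₁ ∧ padd d₃ d₄ = some a₂ ∧
      padd d₁ d₃ = some b₁ ∧ padd d₂ d₄ = some b₂

/-- A signed measure on `E`. -/
def IsSignedMeasure (m : E → ℝ) : Prop :=
  ∀ a b c : E, padd a b = some c → m c = m a + m b

/-- A (positive) measure on `E`. -/
def IsMeasure (m : E → ℝ) : Prop :=
  IsSignedMeasure m ∧ ∀ a : E, 0 ≤ m a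

/-- A state on `E`. -/
def IsState (s : E → ℝ) : Prop := IsMeasure s ∧ s pone = 1

/-- A Jordan signed measure: a difference of two measures. -/
def IsJordan (m : E → ℝ) : Prop :=
  ∃ m₁ m₂ : E → ℝ, IsMeasure m₁ ∧ IsMeasure m₂ ∧ m = m₁ - m₂

/-- `m ≤⁺ m'` iff `m' - m` is a (positive) measure. -/
def MLe (m m' : E → ℝ) : Prop := IsMeasure (m' - m)

/-- The (partial) sum `x₁ + ⋯ + xₙ` of a nonempty list of elements of `E`. -/
def lsum : List E → Option E
  | [] => some pzero
  | [a] => some a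
  | a :: b :: l => (lsum (b :: l)).bind (fun s => padd a s)

end PseudoEffectAlgebra

open Pointwise in
theorem csSup_eq_add_of_add_subset_of_forall_le {M : Type*} [ConditionallyCompleteLattice M]
    [AddGroup M] [AddLeftMono M] [AddRightMono M] {s t u : Set M}
    (hs : s.Nonempty) (hs' : BddAbove s) (ht : t.Nonempty) (ht' : BddAbove t)
    (hu : BddAbove u) (hsub : s + t ⊆ u) (hle : ∀ c ∈ u, ∃ a ∈ s, ∃ b ∈ t, c ≤ a + b) :
    sSup u = sSup s + sSup t := by
  rw [← csSup_add hs hs' ht ht']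
  refine le_antisymm (csSup_le ((hs.add ht).mono hsub) fun c hc => ?_)
    (csSup_le_csSup hu (hs.add ht) hsub)
  obtain ⟨a, ha, b, hb, hcab⟩ := hle c hc
  exact hcab.trans (le_csSup (hs'.add ht') (Set.add_mem_add ha hb))

namespace PseudoEffectAlgebra

variable {E : Type} [PseudoEffectAlgebra E]

lemma exists_padd_padd_of_padd_padd {a b c x y : E} (hxy : padd x y = some a)
    (hab : padd a b = some c) : ∃ z, padd y b = some z ∧ padd x z = some c := by
  obtain ⟨z, hz, -⟩ := (assoc_defined x y b).1 ⟨a, hxy, by simp [hab]⟩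
  exact ⟨z, hz, (assoc_eq x y b a z hxy hz).symm.trans hab⟩

lemma lsum_cons (a : E) {l : List E} (hl : l ≠ []) :
    lsum (a :: l) = (lsum l).bind (padd a) := by
  cases l with
  | nil => exact absurd rfl hl
  | cons b l => rfl

lemma lsum_append {l₁ l₂ : List E} (h₁ : l₁ ≠ []) (h₂ : l₂ ≠ []) {a b c : E}
    (ha : lsum l₁ = some a) (hb : lsum l₂ = some b) (hc : padd a b = some c) :
    lsum (l₁ ++ l₂) = some c := by
  induction l₁ generalizing a c with
  | nil => exact absurd rfl h₁
  | cons x l ih =>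
    rcases eq_or_ne l [] with rfl | hl
    · cases ha
      rw [List.singleton_append, lsum_cons _ h₂, hb]
      exact hc
    · obtain ⟨s, hs, hxs⟩ := Option.bind_eq_some_iff.1 ((lsum_cons x hl).symm.trans ha)
      obtain ⟨z, hsz, hxz⟩ := exists_padd_padd_of_padd_padd hxs hc
      rw [List.cons_append, lsum_cons _ (by simp [hl]), ih hl hs hsz]
      exact hxz

lemma exists_lsum_split (hRDP : RDP E) {d : E → ℝ}
    (hsub : ∀ a b c : E, padd a b = some c → d c ≤ d a + d b)
    {l : List E} (hl : l ≠ []) {s u v : E} (hs : lsum l = some s) (huv : padd u v = some s) :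
    ∃ lu lv : List E, lu ≠ [] ∧ lv ≠ [] ∧ lsum lu = some u ∧ lsum lv = some v ∧
      (l.map d).sum ≤ (lu.map d).sum + (lv.map d).sum := by
  induction l generalizing s u v with
  | nil => exact absurd rfl hl
  | cons x l ih =>
    rcases eq_or_ne l [] with rfl | hl'
    · cases hs
      exact ⟨[u], [v], by simp, by simp, rfl, rfl, by simpa using hsub u v x huv⟩
    · obtain ⟨t, ht, hxt⟩ := Option.bind_eq_some_iff.1 ((lsum_cons x hl').symm.trans hs)
      obtain ⟨d₁, d₂, d₃, d₄, h₁₂, h₃₄, h₁₃, h₂₄⟩ := hRDP x t u v s hxt huv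
      obtain ⟨lu, lv, hlu, hlv, hu, hv, hle⟩ := ih hl' ht h₃₄
      refine ⟨d₁ :: lu, d₂ :: lv, by simp, by simp, ?_, ?_, ?_⟩
      · rw [lsum_cons _ hlu, hu]; exact h₁₃
      · rw [lsum_cons _ hlv, hv]; exact h₂₄
      · simp only [List.map_cons, List.sum_cons]
        linarith [hsub d₁ d₂ x h₁₂]

/-- The set `D(x)` of the paper. -/
def decompSums (d : E → ℝ) (x : E) : Set ℝ :=
  {r | ∃ l : List E, l ≠ [] ∧ lsum l = some x ∧ r = (l.map d).sum}

lemma apply_mem_decompSums (d : E → ℝ) (x : E) : d x ∈ decompSums d x :=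
  ⟨[x], by simp, rfl, by simp⟩

open Pointwise in
lemma decompSums_add_subset (d : E → ℝ) {a b c : E} (hc : padd a b = some c) :
    decompSums d a + decompSums d b ⊆ decompSums d c := by
  rintro _ ⟨_, ⟨l₁, h₁, ha, rfl⟩, _, ⟨l₂, h₂, hb, rfl⟩, rfl⟩
  exact ⟨l₁ ++ l₂, by simp [h₁], lsum_append h₁ h₂ ha hb hc, by simp⟩

lemma exists_le_add_of_mem_decompSums (hRDP : RDP E) {d : E → ℝ}
    (hsub : ∀ a b c : E, padd a b = some c → d c ≤ d a + d b)
    {a b c : E} (hc : padd a b = some c) {r : ℝ} (hr : r ∈ decompSums d c) :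
    ∃ r₁ ∈ decompSums d a, ∃ r₂ ∈ decompSums d b, r ≤ r₁ + r₂ := by
  obtain ⟨l, hl, hlc, rfl⟩ := hr
  obtain ⟨la, lb, hla, hlb, ha, hb, hle⟩ := exists_lsum_split hRDP hsub hl hlc hc
  exact ⟨_, ⟨la, hla, ha, rfl⟩, _, ⟨lb, hlb, hb, rfl⟩, hle⟩

theorem stmt0_general (hRDP : RDP E) (d : E → ℝ)
    (hsub : ∀ a b c : E, padd a b = some c → d c ≤ d a + d b)
    (hbdd : ∀ x : E, BddAbove {r : ℝ | ∃ l : List E, l ≠ [] ∧ lsum l = some x ∧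
      r = (l.map d).sum}) :
    IsSignedMeasure (fun x : E =>
      sSup {r : ℝ | ∃ l : List E, l ≠ [] ∧ lsum l = some x ∧ r = (l.map d).sum}) := by
  intro a b c hc
  exact csSup_eq_add_of_add_subset_of_forall_le ⟨_, apply_mem_decompSums d a⟩ (hbdd a)
    ⟨_, apply_mem_decompSums d b⟩ (hbdd b) (hbdd c) (decompSums_add_subset d hc)
    fun _ => exists_le_add_of_mem_decompSums hRDP hsub hc

/-- Proposition 3.1: if `E` is a pseudo effect algebra with (RDP)
and `d : E → ℝ` is subadditive with each `D(x)` bounded above, then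
`m(x) := sup D(x)` is a signed measure on `E`. -/
theorem stmt0 (hRDP : RDP E) (d : E → ℝ) (hd0 : d pzero = 0)
    (hsub : ∀ a b c : E, padd a b = some c → d c ≤ d a + d b)
    (hbdd : ∀ x : E, BddAbove {r : ℝ | ∃ l : List E, l ≠ [] ∧ lsum l = some x ∧
      r = (l.map d).sum}) :
    IsSignedMeasure (fun x : E =>
      sSup {r : ℝ | ∃ l : List E, l ≠ [] ∧ lsum l = some x ∧ r = (l.map d).sum}) :=
  stmt0_general hRDP d hsub hbdd

end PseudoEffectAlgebra
end

section
/- Let (G, u) be a unital po-group and let m : G → ℝ be a group homomorphism. Then m is relatively bounded if and only if m is bounded on the interval [0, nu] for each integer n ≥ 1. If, in addition, the positive cone of G satisfies (RDP), then m is relatively bounded if and only if m is bounded on the interval [0, u]. -/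
/-!
If `a ≤ W ≤ b`, then `W` lies in the translate `a + [0, n • u]` as soon as `-a + b ≤ n • u`, and a
homomorphism `m` only shifts by the constant `m a` under this translation; so `m` is relatively
bounded iff it is bounded on every `[0, n • u]`. Under (RDP) the interval `[0, v + w]` of the
positive cone is contained in `[0, v] + [0, w]`, hence `m '' [0, n • u]` lies in the `n`-fold sum
of `m '' [0, u]`, which is bounded when `m '' [0, u]` is.
-/

section

variable {G : Type} [AddGroup G] [PartialOrder G]
  [CovariantClass G G (· + ·) (· ≤ ·)]
  [CovariantClass G G (Function.swap (· + ·)) (· ≤ ·)]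

/-- A map `m : G → ℝ` is relatively bounded if the image of every subset of `G`
bounded above and below in `G` is bounded (above and below) in `ℝ`. -/
def RelativelyBounded (m : G →+ ℝ) : Prop :=
  ∀ W : Set G, BddAbove W → BddBelow W → BddAbove (⇑m '' W) ∧ BddBelow (⇑m '' W)

/-- The positive cone `G⁺` satisfies the Riesz Decomposition Property. -/
def ConeRDP (G : Type) [AddGroup G] [PartialOrder G] : Prop :=
  ∀ a₁ a₂ b₁ b₂ : G, 0 ≤ a₁ → 0 ≤ a₂ → 0 ≤ b₁ → 0 ≤ b₂ → a₁ + a₂ = b₁ + b₂ →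
    ∃ d₁ d₂ d₃ d₄ : G, 0 ≤ d₁ ∧ 0 ≤ d₂ ∧ 0 ≤ d₃ ∧ 0 ≤ d₄ ∧
      d₁ + d₂ = a₁ ∧ d₃ + d₄ = a₂ ∧ d₁ + d₃ = b₁ ∧ d₂ + d₄ = b₂

open Set Bornology Pointwise

theorem bddAbove_and_bddBelow_iff_isBounded {β : Type*} [Preorder β] [Bornology β]
    [IsOrderBornology β] {s : Set β} : BddAbove s ∧ BddBelow s ↔ IsBounded s :=
  and_comm.trans isBounded_iff_bddBelow_bddAbove.symm

section PoGroup

variable {α : Type} [AddGroup α] [PartialOrder α] [AddLeftMono α]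

theorem Icc_subset_singleton_add_Icc_zero {a b c : α} (h : -a + b ≤ c) :
    Icc a b ⊆ {a} + Icc 0 c := by
  intro x ⟨hax, hxb⟩
  refine ⟨a, rfl, -a + x, ⟨?_, ?_⟩, add_neg_cancel_left a x⟩
  · simpa using add_le_add_right hax (-a)
  · exact (add_le_add_right hxb (-a)).trans h

theorem Icc_zero_add_subset_add_of_coneRDP (hG : ConeRDP α) {v w : α} (hv : 0 ≤ v)
    (hw : 0 ≤ w) : Icc 0 (v + w) ⊆ Icc 0 v + Icc 0 w := by
  intro x ⟨hx₀, hx⟩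
  have hrest : 0 ≤ -x + (v + w) := by simpa using add_le_add_right hx (-x)
  obtain ⟨d₁, d₂, d₃, d₄, h₁, h₂, h₃, h₄, rfl, -, hv', hw'⟩ :=
    hG x (-x + (v + w)) v w hx₀ hrest hv hw (add_neg_cancel_left x _)
  refine ⟨d₁, ⟨h₁, ?_⟩, d₂, ⟨h₂, ?_⟩, rfl⟩
  · simpa [hv'] using add_le_add_right h₃ d₁
  · simpa [hw'] using add_le_add_right h₄ d₂

section Bounded

variable {E : Type*} [SeminormedAddGroup E] {m : α →+ E} {u : α}

theorem isBounded_image_of_subset_Icc (hstrong : ∀ g : α, ∃ n : ℕ, 1 ≤ n ∧ g ≤ n • u)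
    (hm : ∀ n : ℕ, 1 ≤ n → IsBounded (m '' Icc 0 (n • u))) {W : Set α} {a b : α}
    (hW : W ⊆ Icc a b) : IsBounded (m '' W) := by
  obtain ⟨n, hn, hba⟩ := hstrong (-a + b)
  refine ((isBounded_singleton (x := m a)).add (hm n hn)).subset ?_
  simpa only [image_add, image_singleton] using
    image_mono (f := m) (hW.trans (Icc_subset_singleton_add_Icc_zero hba))

theorem isBounded_image_Icc_nsmul_of_coneRDP (hG : ConeRDP α) (hu : 0 ≤ u)
    (hm : IsBounded (m '' Icc 0 u)) : ∀ n : ℕ, IsBounded (m '' Icc 0 (n • u))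
  | 0 => by simp
  | n + 1 => by
    rw [succ_nsmul]
    refine ((isBounded_image_Icc_nsmul_of_coneRDP hG hu hm n).add hm).subset ?_
    rw [← image_add]
    exact image_mono (Icc_zero_add_subset_add_of_coneRDP hG (nsmul_nonneg hu n) hu)

end Bounded

theorem relativelyBounded_iff_forall_isBounded_image_Icc_nsmul {u : α}
    (hstrong : ∀ g : α, ∃ n : ℕ, 1 ≤ n ∧ g ≤ n • u) (m : α →+ ℝ) :
    RelativelyBounded m ↔ ∀ n : ℕ, 1 ≤ n → IsBounded (m '' Icc 0 (n • u)) := by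
  simp only [RelativelyBounded, bddAbove_and_bddBelow_iff_isBounded]
  exact ⟨fun h n _ ↦ h _ bddAbove_Icc bddBelow_Icc,
    fun h _ ⟨b, hb⟩ ⟨a, ha⟩ ↦ isBounded_image_of_subset_Icc hstrong h fun _ hx ↦ ⟨ha hx, hb hx⟩⟩

end PoGroup

/-- Lemma 4.0: for a group homomorphism `m : G → ℝ` on a unital
po-group `(G, u)`, `m` is relatively bounded iff it is bounded on each `[0, nu]`,
`n ≥ 1`; and if `G⁺` satisfies (RDP), then `m` is relatively bounded iff it is
bounded on `[0, u]`. -/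
theorem stmt1 (u : G) (hu : 0 ≤ u)
    (hstrong : ∀ g : G, ∃ n : ℕ, 1 ≤ n ∧ g ≤ n • u)
    (m : G →+ ℝ) :
    (RelativelyBounded m ↔ ∀ n : ℕ, 1 ≤ n →
      BddAbove (⇑m '' Set.Icc 0 (n • u)) ∧ BddBelow (⇑m '' Set.Icc 0 (n • u))) ∧
    (ConeRDP G → (RelativelyBounded m ↔
      BddAbove (⇑m '' Set.Icc 0 u) ∧ BddBelow (⇑m '' Set.Icc 0 u))) := by
  simp only [bddAbove_and_bddBelow_iff_isBounded]
  have hrel := relativelyBounded_iff_forall_isBounded_image_Icc_nsmul hstrong m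
  refine ⟨hrel, fun hG ↦ hrel.trans ⟨fun h ↦ by simpa using h 1 le_rfl, fun h n _ ↦ ?_⟩⟩
  exact isBounded_image_Icc_nsmul_of_coneRDP hG hu h n

end
end

section
/- Let E be a pseudo effect algebra satisfying (RDP) and let m : E → ℝ be a signed measure. Then m is relatively bounded if and only if m = m₁ − m₂ for some measures m₁, m₂ on E. -/
namespace PseudoEffectAlgebra

variable {E : Type} [PseudoEffectAlgebra E]

/-- `m : E → ℝ` is relatively bounded if the image of every subset of `E` bounded
above and below in the order of `E` is bounded in `ℝ`. -/
def RelativelyBoundedE (m : E → ℝ) : Prop :=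
  ∀ W : Set E, (∃ a : E, ∀ w ∈ W, pLe a w) → (∃ b : E, ∀ w ∈ W, pLe w b) →
    BddAbove (m '' W) ∧ BddBelow (m '' W)

/-!
Relative boundedness says exactly that `m⁺ a = sup {m x | x ≤ a}` is finite. Under (RDP) `m⁺` is
additive: any `z ≤ a + b` splits as `z = d₁ + d₂` with `d₁ ≤ a`, `d₂ ≤ b`, giving
`m⁺ (a + b) ≤ m⁺ a + m⁺ b`, while elements below `a` and below `b` add up to one below `a + b`,
giving the reverse inequality. Then `m = m⁺ - (m⁺ - m)` is a difference of two measures.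
Conversely, a difference of measures is bounded on an order interval by monotonicity.
-/

lemma padd_one_zero : padd (pone : E) pzero = some pone := by
  obtain ⟨d, hd, -⟩ := exists_unique_right (pone : E)
  rwa [one_add d (by rw [hd]; rfl)] at hd

lemma padd_zero_one : padd (pzero : E) pone = some pone := by
  obtain ⟨e, he, -⟩ := exists_unique_left (pone : E)
  rwa [add_one e (by rw [he]; rfl)] at he

lemma pzero_padd (b : E) : padd pzero b = some b := by
  obtain ⟨c, hc, -⟩ := exists_unique_right b
  obtain ⟨x, hx, -⟩ := (assoc_defined pzero b c).2 ⟨pone, hc, by rw [padd_zero_one]; rfl⟩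
  have hxc : padd x c = some pone := by rw [assoc_eq pzero b c x pone hx hc, padd_zero_one]
  obtain ⟨e, -, huniq⟩ := exists_unique_left c
  rwa [(huniq x hxc).trans (huniq b hc).symm] at hx

lemma padd_pzero (b : E) : padd b pzero = some b := by
  obtain ⟨e, he, -⟩ := exists_unique_left b
  obtain ⟨y, hy, -⟩ := (assoc_defined e b pzero).1 ⟨pone, he, by rw [padd_one_zero]; rfl⟩
  have hey : padd e y = some pone := by rw [← assoc_eq e b pzero pone y he hy, padd_one_zero]
  obtain ⟨d, -, huniq⟩ := exists_unique_right e
  rwa [(huniq y hey).trans (huniq b he).symm] at hy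

lemma pLe_refl (a : E) : pLe a a := ⟨pzero, padd_pzero a⟩

lemma pzero_pLe (a : E) : pLe pzero a := ⟨a, pzero_padd a⟩

lemma pLe_trans {a b c : E} (hab : pLe a b) (hbc : pLe b c) : pLe a c := by
  obtain ⟨u, hu⟩ := hab
  obtain ⟨v, hv⟩ := hbc
  obtain ⟨y, hy, -⟩ := (assoc_defined a u v).1 ⟨b, hu, by rw [hv]; rfl⟩
  exact ⟨y, by rw [← assoc_eq a u v b y hu hy, hv]⟩

lemma exists_padd_pLe_of_pLe {a b c x y : E} (hab : padd a b = some c)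
    (hx : pLe x a) (hy : pLe y b) : ∃ z, padd x y = some z ∧ pLe z c := by
  obtain ⟨u, hu⟩ := hx
  obtain ⟨v, hv⟩ := hy
  -- `c = (a + y) + v` and `a + y = x + (u + y)`; then move `y` to the front of `u + y`.
  obtain ⟨t, ht, -⟩ := (assoc_defined a y v).2 ⟨b, hv, by rw [hab]; rfl⟩
  have htv : padd t v = some c := by rw [assoc_eq a y v t b ht hv, hab]
  obtain ⟨w, hw, -⟩ := (assoc_defined x u y).1 ⟨a, hu, by rw [ht]; rfl⟩
  have hxw : padd x w = some t := by rw [← assoc_eq x u y a w hu hw, ht]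
  obtain ⟨-, e, -, hye⟩ := shift u y w hw
  obtain ⟨z, hz, -⟩ := (assoc_defined x y e).2 ⟨w, hye, by rw [hxw]; rfl⟩
  have hze : padd z e = some t := by rw [assoc_eq x y e z w hz hye, hxw]
  exact ⟨z, hz, pLe_trans ⟨e, hze⟩ ⟨v, htv⟩⟩

lemma IsSignedMeasure.map_pzero {m : E → ℝ} (hm : IsSignedMeasure m) : m pzero = 0 := by
  linarith [hm pzero pzero pzero (pzero_padd pzero)]

lemma IsMeasure.mono {m : E → ℝ} (hm : IsMeasure m) {a b : E} (hab : pLe a b) :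
    m a ≤ m b := by
  obtain ⟨c, hc⟩ := hab
  linarith [hm.1 a c b hc, hm.2 c]

lemma IsSignedMeasure.sub {m₁ m₂ : E → ℝ} (h₁ : IsSignedMeasure m₁)
    (h₂ : IsSignedMeasure m₂) : IsSignedMeasure (m₁ - m₂) := by
  intro a b c hab
  simp only [Pi.sub_apply, h₁ a b c hab, h₂ a b c hab]
  ring

lemma relativelyBoundedE_sub {m₁ m₂ : E → ℝ} (h₁ : IsMeasure m₁) (h₂ : IsMeasure m₂) :
    RelativelyBoundedE (m₁ - m₂) := by
  rintro W ⟨a, ha⟩ ⟨b, hb⟩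
  refine ⟨⟨m₁ b - m₂ a, ?_⟩, ⟨m₁ a - m₂ b, ?_⟩⟩ <;> rintro _ ⟨w, hw, rfl⟩ <;>
    simp only [Pi.sub_apply]
  · linarith [h₁.mono (hb w hw), h₂.mono (ha w hw)]
  · linarith [h₁.mono (ha w hw), h₂.mono (hb w hw)]

lemma RelativelyBoundedE.bddAbove_image_pLe {m : E → ℝ} (hm : RelativelyBoundedE m) (a : E) :
    BddAbove (m '' {x | pLe x a}) :=
  (hm _ ⟨pzero, fun w _ => pzero_pLe w⟩ ⟨a, fun _ hw => hw⟩).1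

/-- The positive part `m⁺` of `m`; a junk value unless `m` is bounded above below `a`. -/
noncomputable def posVariation (m : E → ℝ) (a : E) : ℝ := sSup (m '' {x | pLe x a})

section posVariation

variable {m : E → ℝ}

lemma le_posVariation (hbdd : ∀ a : E, BddAbove (m '' {x | pLe x a})) {x a : E}
    (hxa : pLe x a) : m x ≤ posVariation m a :=
  le_csSup (hbdd a) ⟨x, hxa, rfl⟩

lemma posVariation_nonneg (hbdd : ∀ a : E, BddAbove (m '' {x | pLe x a}))
    (hm : IsSignedMeasure m) (a : E) : 0 ≤ posVariation m a :=
  hm.map_pzero ▸ le_posVariation hbdd (pzero_pLe a)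

lemma posVariation_le_add (hbdd : ∀ a : E, BddAbove (m '' {x | pLe x a}))
    (hRDP : RDP E) (hm : IsSignedMeasure m) {a b c : E}
    (hab : padd a b = some c) : posVariation m c ≤ posVariation m a + posVariation m b := by
  refine csSup_le ⟨m pzero, pzero, pzero_pLe c, rfl⟩ ?_
  rintro _ ⟨z, ⟨w, hzw⟩, rfl⟩
  obtain ⟨d₁, d₂, d₃, d₄, h₁₂, -, h₁₃, h₂₄⟩ := hRDP z w a b c hzw hab
  rw [hm d₁ d₂ z h₁₂]
  exact add_le_add (le_posVariation hbdd ⟨d₃, h₁₃⟩) (le_posVariation hbdd ⟨d₄, h₂₄⟩)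

lemma add_le_posVariation (hbdd : ∀ a : E, BddAbove (m '' {x | pLe x a}))
    (hm : IsSignedMeasure m) {a b c : E} (hab : padd a b = some c) :
    posVariation m a + posVariation m b ≤ posVariation m c := by
  have hne : ∀ a : E, (m '' {x | pLe x a}).Nonempty := fun a => ⟨_, pzero, pzero_pLe a, rfl⟩
  rw [posVariation, posVariation, ← csSup_add (hne a) (hbdd a) (hne b) (hbdd b)]
  refine csSup_le ((hne a).add (hne b)) ?_
  rintro _ ⟨_, ⟨x, hx, rfl⟩, _, ⟨y, hy, rfl⟩, rfl⟩
  obtain ⟨z, hz, hzc⟩ := exists_padd_pLe_of_pLe hab hx hy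
  show m x + m y ≤ _
  exact hm x y z hz ▸ le_posVariation hbdd hzc

lemma isMeasure_posVariation (hbdd : ∀ a : E, BddAbove (m '' {x | pLe x a}))
    (hRDP : RDP E) (hm : IsSignedMeasure m) :
    IsMeasure (posVariation m) :=
  ⟨fun _ _ _ hab => le_antisymm (posVariation_le_add hbdd hRDP hm hab)
    (add_le_posVariation hbdd hm hab), posVariation_nonneg hbdd hm⟩

lemma isMeasure_posVariation_sub (hbdd : ∀ a : E, BddAbove (m '' {x | pLe x a}))
    (hRDP : RDP E) (hm : IsSignedMeasure m) :
    IsMeasure (posVariation m - m) :=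
  ⟨(isMeasure_posVariation hbdd hRDP hm).1.sub hm,
    fun a => sub_nonneg.2 (le_posVariation hbdd (pLe_refl a))⟩

end posVariation

/-- Proposition 3.2: a signed measure `m` on a pseudo effect
algebra with (RDP) is relatively bounded iff `m = m₁ - m₂` for measures `m₁, m₂`. -/
theorem stmt2 (hRDP : RDP E) (m : E → ℝ) (hm : IsSignedMeasure m) :
    RelativelyBoundedE m ↔
      ∃ m₁ m₂ : E → ℝ, IsMeasure m₁ ∧ IsMeasure m₂ ∧ m = m₁ - m₂ := by
  constructor
  · intro hrb
    have hbdd := hrb.bddAbove_image_pLe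
    exact ⟨posVariation m, posVariation m - m, isMeasure_posVariation hbdd hRDP hm,
      isMeasure_posVariation_sub hbdd hRDP hm, (sub_sub_cancel _ _).symm⟩
  · rintro ⟨m₁, m₂, h₁, h₂, rfl⟩
    exact relativelyBoundedE_sub h₁ h₂

end PseudoEffectAlgebra
end

section
/- Let E be a pseudo effect algebra and let X be a subset of the state space S(E). A state s ∈ S(E) belongs to the face of S(E) generated by X if and only if s ≤⁺ α t for some real constant α > 0 and some state t in the convex hull of X. -/
namespace PseudoEffectAlgebra

variable {E : Type} [PseudoEffectAlgebra E]

variable (E) in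
/-- The state space `S(E)`. -/
def stateSet : Set (E → ℝ) := {s | IsState s}

variable (E) in
/-- A face of the convex set `S(E)`. -/
def IsFace (F : Set (E → ℝ)) : Prop :=
  F ⊆ stateSet E ∧
  (∀ s₁ ∈ F, ∀ s₂ ∈ F, ∀ lam : ℝ, 0 ≤ lam → lam ≤ 1 →
    lam • s₁ + (1 - lam) • s₂ ∈ F) ∧
  (∀ s₁ ∈ stateSet E, ∀ s₂ ∈ stateSet E, ∀ lam : ℝ, 0 < lam → lam < 1 →
    lam • s₁ + (1 - lam) • s₂ ∈ F → s₁ ∈ F ∧ s₂ ∈ F)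

variable (E) in
/-- The face of `S(E)` generated by a set `X` (the smallest face containing `X`). -/
def faceGen (X : Set (E → ℝ)) : Set (E → ℝ) :=
  ⋂₀ {F : Set (E → ℝ) | IsFace E F ∧ X ⊆ F}

/-!
The states `u` with `u ≤⁺ α t` for some `α > 0` and `t ∈ conv X` form a face of `S(E)`
containing `X`: convex combinations of such dominations add up (the cone over `conv X` is
convex), and `λ s₁ + (1 - λ) s₂ ≤⁺ α t` gives `s₁ ≤⁺ (α / λ) t`. This gives one inclusion.
Conversely, if `s ≤⁺ α t` we may enlarge `α` to have `α > 1`; then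
`u = (α - 1)⁻¹ (α t - s)` is a state and `t = α⁻¹ s + (1 - α⁻¹) u`, so every face
containing `t`, and hence every face containing `X`, contains `s`.
-/

lemma IsMeasure.add {m₁ m₂ : E → ℝ} (h₁ : IsMeasure m₁) (h₂ : IsMeasure m₂) :
    IsMeasure (m₁ + m₂) := by
  refine ⟨fun a b c h => ?_, fun a => add_nonneg (h₁.2 a) (h₂.2 a)⟩
  simp only [Pi.add_apply, h₁.1 a b c h, h₂.1 a b c h]
  ring

lemma IsMeasure.smul {m : E → ℝ} {c : ℝ} (hc : 0 ≤ c) (h : IsMeasure m) :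
    IsMeasure (c • m) := by
  refine ⟨fun a b x hx => ?_, fun a => mul_nonneg hc (h.2 a)⟩
  simp only [Pi.smul_apply, smul_eq_mul, h.1 a b x hx]
  ring

lemma mLe_refl (m : E → ℝ) : MLe m m := by
  refine ⟨fun a b c _ => ?_, fun a => ?_⟩ <;> simp

lemma MLe.add {m₁ m₂ n₁ n₂ : E → ℝ} (h₁ : MLe m₁ n₁) (h₂ : MLe m₂ n₂) :
    MLe (m₁ + m₂) (n₁ + n₂) := by
  have h : n₁ + n₂ - (m₁ + m₂) = (n₁ - m₁) + (n₂ - m₂) := by abel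
  unfold MLe at *
  rw [h]
  exact h₁.add h₂

lemma MLe.smul {m n : E → ℝ} {c : ℝ} (hc : 0 ≤ c) (h : MLe m n) : MLe (c • m) (c • n) := by
  have h' : c • n - c • m = c • (n - m) := (smul_sub c n m).symm
  unfold MLe at *
  rw [h']
  exact h.smul hc

lemma MLe.smul_mono {m t : E → ℝ} {α β : ℝ} (h : MLe m (α • t)) (ht : IsMeasure t)
    (hαβ : α ≤ β) : MLe m (β • t) := by
  have h' : β • t - m = (α • t - m) + (β - α) • t := by rw [sub_smul]; abel
  unfold MLe at *
  rw [h']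
  exact h.add (ht.smul (sub_nonneg.2 hαβ))

lemma MLe.of_smul_add {m₁ m₂ n : E → ℝ} {lam : ℝ} (hlam : 0 < lam) (h₂ : IsMeasure m₂)
    (h : MLe (lam • m₁ + m₂) n) : MLe m₁ (lam⁻¹ • n) := by
  have h' : lam⁻¹ • n - m₁ = lam⁻¹ • (n - (lam • m₁ + m₂)) + lam⁻¹ • m₂ := by
    match_scalars <;> simp [hlam.ne']
  have hinv : 0 ≤ lam⁻¹ := inv_nonneg.2 hlam.le
  unfold MLe
  rw [h']
  exact (IsMeasure.smul hinv h).add (h₂.smul hinv)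

lemma convex_stateSet : Convex ℝ (stateSet E) := by
  intro s₁ h₁ s₂ h₂ a b ha hb hab
  refine ⟨(h₁.1.smul ha).add (h₂.1.smul hb), ?_⟩
  simp only [Pi.add_apply, Pi.smul_apply, smul_eq_mul, h₁.2, h₂.2]
  linarith

lemma IsFace.convex {F : Set (E → ℝ)} (hF : IsFace E F) : Convex ℝ F := by
  intro s₁ h₁ s₂ h₂ a b ha hb hab
  obtain rfl : b = 1 - a := by linarith
  exact hF.2.1 s₁ h₁ s₂ h₂ a ha (by linarith)

lemma IsFace.mem_of_mLe_smul {F : Set (E → ℝ)} (hF : IsFace E F) {s t : E → ℝ}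
    (hs : s ∈ stateSet E) (ht : t ∈ F) {α : ℝ} (hα : 1 < α) (hst : MLe s (α • t)) :
    s ∈ F := by
  have htS : t ∈ stateSet E := hF.1 ht
  have hα0 : α ≠ 0 := by positivity
  have hα1 : α - 1 ≠ 0 := sub_ne_zero.2 hα.ne'
  set u : E → ℝ := (α - 1)⁻¹ • (α • t - s)
  have hu : u ∈ stateSet E := by
    refine ⟨IsMeasure.smul (inv_nonneg.2 (sub_nonneg.2 hα.le)) hst, ?_⟩
    simp only [u, Pi.smul_apply, Pi.sub_apply, smul_eq_mul, hs.2, htS.2]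
    field_simp
  have ht_eq : α⁻¹ • s + (1 - α⁻¹) • u = t := by
    funext a
    simp only [u, Pi.add_apply, Pi.smul_apply, Pi.sub_apply, smul_eq_mul]
    field_simp
    ring
  have hαinv : α⁻¹ < 1 := inv_lt_one_of_one_lt₀ hα
  exact (hF.2.2 s hs u hu α⁻¹ (by positivity) hαinv (ht_eq ▸ ht)).1

variable (E) in
def hullDominated (X : Set (E → ℝ)) : Set (E → ℝ) :=
  {u | u ∈ stateSet E ∧ ∃ α : ℝ, 0 < α ∧ ∃ t ∈ convexHull ℝ X, MLe u (α • t)}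

lemma subset_hullDominated {X : Set (E → ℝ)} (hX : X ⊆ stateSet E) :
    X ⊆ hullDominated E X := fun x hx =>
  ⟨hX hx, 1, one_pos, x, subset_convexHull ℝ X hx, (one_smul ℝ x).symm ▸ mLe_refl x⟩

lemma convex_hullDominated (X : Set (E → ℝ)) : Convex ℝ (hullDominated E X) := by
  rintro s₁ ⟨hs₁, α₁, hα₁, t₁, ht₁, h₁⟩ s₂ ⟨hs₂, α₂, hα₂, t₂, ht₂, h₂⟩ a b ha hb hab
  obtain ⟨t, ht, ht_eq⟩ := (convex_convexHull ℝ X).exists_mem_add_smul_eq ht₁ ht₂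
    (mul_nonneg ha hα₁.le) (mul_nonneg hb hα₂.le)
  have hβ : 0 < a * α₁ + b * α₂ := by
    rcases ha.eq_or_lt with rfl | ha'
    · simp only [zero_add] at hab
      simp [hab, hα₂]
    · exact add_pos_of_pos_of_nonneg (mul_pos ha' hα₁) (mul_nonneg hb hα₂.le)
  refine ⟨convex_stateSet hs₁ hs₂ ha hb hab, _, hβ, t, ht, ?_⟩
  rw [ht_eq, mul_smul, mul_smul]
  exact (h₁.smul ha).add (h₂.smul hb)

lemma isFace_hullDominated (X : Set (E → ℝ)) : IsFace E (hullDominated E X) := by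
  refine ⟨fun u hu => hu.1, fun s₁ h₁ s₂ h₂ lam h0 h1 =>
    convex_hullDominated X h₁ h₂ h0 (sub_nonneg.2 h1) (add_sub_cancel lam 1), ?_⟩
  rintro s₁ hs₁ s₂ hs₂ lam h0 h1 ⟨-, α, hα, t, ht, hst⟩
  have h1' : 0 < 1 - lam := sub_pos.2 h1
  refine ⟨⟨hs₁, lam⁻¹ * α, by positivity, t, ht, ?_⟩,
    ⟨hs₂, (1 - lam)⁻¹ * α, by positivity, t, ht, ?_⟩⟩
  · rw [mul_smul]
    exact hst.of_smul_add h0 (hs₂.1.smul h1'.le)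
  · rw [mul_smul]
    rw [add_comm] at hst
    exact hst.of_smul_add h1' (hs₁.1.smul h0.le)

/-- Lemma 4.1: a state `s` belongs to the face of `S(E)` generated
by `X ⊆ S(E)` iff `s ≤⁺ α t` for some `α > 0` and some `t` in the convex hull of `X`. -/
theorem stmt7 (X : Set (E → ℝ)) (hX : X ⊆ stateSet E)
    (s : E → ℝ) (hs : s ∈ stateSet E) :
    s ∈ faceGen E X ↔
      ∃ α : ℝ, 0 < α ∧ ∃ t ∈ convexHull ℝ X, MLe s (α • t) := by
  constructor
  · intro h
    exact (h _ ⟨isFace_hullDominated X, subset_hullDominated hX⟩).2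
  · rintro ⟨α, hα, t, ht, hst⟩ F ⟨hF, hXF⟩
    have htS : t ∈ stateSet E := convexHull_min hX convex_stateSet ht
    have htF : t ∈ F := convexHull_min hXF hF.convex ht
    have hst' : MLe s ((α + 1) • t) := hst.smul_mono htS.1 (by linarith)
    exact hF.mem_of_mLe_smul hs htF (by linarith) hst'

end PseudoEffectAlgebra
end

section
/- Let E be a pseudo effect algebra satisfying (RDP) and let s₁, s₂ be states on E. Then s₁ ⋀ s₂ is a state if and only if s₁ = s₂, and this holds if and only if s₁ ⋁ s₂ is a state. Moreover, if for λ ∈ [0,1] one sets s_λ := λs₁ + (1−λ)s₂, then s₁ ⋀ s₂ = ⋀{s_λ : λ ∈ [0,1]} in J(E), and this infimum is a (positive) measure. -/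
namespace PseudoEffectAlgebra

variable {E : Type} [PseudoEffectAlgebra E]

/-- `m` is the supremum, in the po-group `J(E)` of Jordan signed measures ordered
by `≤⁺`, of the set `S`. -/
def IsSupIn (S : Set (E → ℝ)) (m : E → ℝ) : Prop :=
  IsJordan m ∧ (∀ t ∈ S, MLe t m) ∧
    ∀ h : E → ℝ, IsJordan h → (∀ t ∈ S, MLe t h) → MLe m h

/-- `m` is the infimum, in the po-group `J(E)` of Jordan signed measures ordered
by `≤⁺`, of the set `S`. -/
def IsInfIn (S : Set (E → ℝ)) (m : E → ℝ) : Prop :=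
  IsJordan m ∧ (∀ t ∈ S, MLe m t) ∧
    ∀ h : E → ℝ, IsJordan h → (∀ t ∈ S, MLe h t) → MLe h m

/- Every `a` has a complement `a + a' = 1`, so a measure vanishing at `1` vanishes identically.
Hence two `≤⁺`-comparable measures agreeing at `1` coincide, which gives both equivalences.
The infimum is a measure because `0` lies below both states, and it lies below every
`λ s₁ + (1 - λ) s₂` because the measures form a convex cone; since `s₁` and `s₂` are themselves
on the segment, it is also the infimum of the segment. -/

lemma isMeasure_zero : IsMeasure (0 : E → ℝ) :=
  ⟨fun _ _ _ _ => by simp, fun _ => le_rfl⟩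

lemma IsMeasure.smul_add_smul {m n : E → ℝ} (hm : IsMeasure m) (hn : IsMeasure n) {a b : ℝ}
    (ha : 0 ≤ a) (hb : 0 ≤ b) : IsMeasure (a • m + b • n) := by
  refine ⟨fun x y z hxyz => ?_, fun x => ?_⟩
  · simp only [Pi.add_apply, Pi.smul_apply, smul_eq_mul, hm.1 x y z hxyz, hn.1 x y z hxyz]
    ring
  · simp only [Pi.add_apply, Pi.smul_apply, smul_eq_mul]
    have := hm.2 x
    have := hn.2 x
    positivity

lemma IsMeasure.isJordan {m : E → ℝ} (hm : IsMeasure m) : IsJordan m :=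
  ⟨m, 0, hm, isMeasure_zero, (sub_zero m).symm⟩

lemma IsMeasure.eq_zero_of_apply_one {m : E → ℝ} (hm : IsMeasure m) (h1 : m pone = 0) :
    m = 0 := by
  funext a
  obtain ⟨a', ha', -⟩ := exists_unique_right a
  have := hm.1 a a' pone ha'
  rw [Pi.zero_apply]
  linarith [hm.2 a, hm.2 a']

lemma mLe_zero_iff {m : E → ℝ} : MLe 0 m ↔ IsMeasure m := by
  simp [MLe]

lemma MLe.antisymm {m m' : E → ℝ} (h : MLe m m') (h' : MLe m' m) : m = m' := by
  funext a
  linarith [h.2 a, h'.2 a, Pi.sub_apply m' m a, Pi.sub_apply m m' a]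

lemma MLe.eq_of_apply_one_eq {m m' : E → ℝ} (h : MLe m m') (h1 : m pone = m' pone) :
    m = m' := by
  have h0 := congrFun (h.eq_zero_of_apply_one (by simp [h1]))
  funext a
  simpa [sub_eq_zero, eq_comm] using h0 a

lemma MLe.smul_add_smul {w s t : E → ℝ} (hs : MLe w s) (ht : MLe w t) {a b : ℝ} (ha : 0 ≤ a)
    (hb : 0 ≤ b) (hab : a + b = 1) : MLe w (a • s + b • t) := by
  have : a • s + b • t - w = a • (s - w) + b • (t - w) := by
    funext x
    simp only [Pi.add_apply, Pi.sub_apply, Pi.smul_apply, smul_eq_mul]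
    linear_combination w x * hab
  rw [MLe, this]
  exact IsMeasure.smul_add_smul hs ht ha hb

section Bounds

variable {S T : Set (E → ℝ)} {w : E → ℝ}

lemma IsInfIn.isMeasure (hw : IsInfIn S w) (hS : ∀ t ∈ S, IsMeasure t) : IsMeasure w :=
  mLe_zero_iff.1 <| hw.2.2 0 isMeasure_zero.isJordan fun t ht => mLe_zero_iff.2 (hS t ht)

lemma IsInfIn.of_subset (hw : IsInfIn S w) (hST : S ⊆ T) (hT : ∀ t ∈ T, MLe w t) :
    IsInfIn T w :=
  ⟨hw.1, hT, fun h hh hhT => hw.2.2 h hh fun t ht => hhT t (hST ht)⟩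

lemma IsInfIn.eq_of_singleton {s : E → ℝ} (hw : IsInfIn {s} w) (hs : IsJordan s) : w = s :=
  (hw.2.1 s rfl).antisymm <| hw.2.2 s hs fun _ ht => ht ▸ mLe_refl s

lemma IsSupIn.eq_of_singleton {s : E → ℝ} (hw : IsSupIn {s} w) (hs : IsJordan s) : w = s :=
  (hw.2.2 s hs fun _ ht => ht ▸ mLe_refl s).antisymm (hw.2.1 s rfl)

end Bounds

section States

variable {s₁ s₂ : E → ℝ} (h₁ : IsState s₁) (h₂ : IsState s₂)
include h₁ h₂

lemma IsInfIn.isState_iff_eq {w : E → ℝ} (hw : IsInfIn {s₁, s₂} w) :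
    IsState w ↔ s₁ = s₂ := by
  refine ⟨fun hws => ?_, fun h => ?_⟩
  · have e₁ := (hw.2.1 s₁ (.inl rfl)).eq_of_apply_one_eq (hws.2.trans h₁.2.symm)
    have e₂ := (hw.2.1 s₂ (.inr rfl)).eq_of_apply_one_eq (hws.2.trans h₂.2.symm)
    exact e₁.symm.trans e₂
  · subst h
    rw [Set.pair_eq_singleton] at hw
    exact hw.eq_of_singleton h₁.1.isJordan ▸ h₁

lemma IsSupIn.isState_iff_eq {v : E → ℝ} (hv : IsSupIn {s₁, s₂} v) :
    IsState v ↔ s₁ = s₂ := by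
  refine ⟨fun hvs => ?_, fun h => ?_⟩
  · have e₁ := (hv.2.1 s₁ (.inl rfl)).eq_of_apply_one_eq (h₁.2.trans hvs.2.symm)
    have e₂ := (hv.2.1 s₂ (.inr rfl)).eq_of_apply_one_eq (h₂.2.trans hvs.2.symm)
    exact e₁.trans e₂.symm
  · subst h
    rw [Set.pair_eq_singleton] at hv
    exact hv.eq_of_singleton h₁.1.isJordan ▸ h₁

end States

theorem stmt10_general (s₁ s₂ : E → ℝ) (h₁ : IsState s₁) (h₂ : IsState s₂) :
    (∀ w : E → ℝ, IsInfIn {s₁, s₂} w →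
      ((IsState w ↔ s₁ = s₂) ∧ IsMeasure w ∧
        IsInfIn {f : E → ℝ | ∃ lam : ℝ, 0 ≤ lam ∧ lam ≤ 1 ∧
          f = lam • s₁ + (1 - lam) • s₂} w)) ∧
    (∀ v : E → ℝ, IsSupIn {s₁, s₂} v → (IsState v ↔ s₁ = s₂)) := by
  refine ⟨fun w hw => ⟨hw.isState_iff_eq h₁ h₂, ?_, ?_⟩, fun v hv => hv.isState_iff_eq h₁ h₂⟩
  · refine hw.isMeasure ?_
    rintro t (rfl | rfl)
    exacts [h₁.1, h₂.1]
  · refine hw.of_subset ?_ ?_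
    · refine Set.insert_subset_iff.2 ⟨⟨1, zero_le_one, le_rfl, ?_⟩, ?_⟩
      · simp
      · exact Set.singleton_subset_iff.2 ⟨0, le_rfl, zero_le_one, by simp⟩
    · rintro t ⟨lam, hl₀, hl₁, rfl⟩
      exact (hw.2.1 s₁ (.inl rfl)).smul_add_smul (hw.2.1 s₂ (.inr rfl)) hl₀
        (sub_nonneg.2 hl₁) (add_sub_cancel lam 1)

/-- Proposition 4.3: for states `s₁, s₂` on a pseudo effect
algebra with (RDP): `s₁ ⋀ s₂` is a state iff `s₁ = s₂` iff `s₁ ⋁ s₂` is a state;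
moreover `s₁ ⋀ s₂ = ⋀{λ s₁ + (1-λ) s₂ : λ ∈ [0,1]}` and it is a (positive) measure. -/
theorem stmt10 (hRDP : RDP E) (s₁ s₂ : E → ℝ) (h₁ : IsState s₁) (h₂ : IsState s₂) :
    (∀ w : E → ℝ, IsInfIn {s₁, s₂} w →
      ((IsState w ↔ s₁ = s₂) ∧ IsMeasure w ∧
        IsInfIn {f : E → ℝ | ∃ lam : ℝ, 0 ≤ lam ∧ lam ≤ 1 ∧
          f = lam • s₁ + (1 - lam) • s₂} w)) ∧
    (∀ v : E → ℝ, IsSupIn {s₁, s₂} v → (IsState v ↔ s₁ = s₂)) :=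
  stmt10_general s₁ s₂ h₁ h₂

end PseudoEffectAlgebra
end
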